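/- Let s ≥ 0, β ∈ (1/2, 1). There exists C = C(s) such that for nonzero l, m, k ∈ ℤ² with l + m + k = 0 and |l| ≤ |m| ≤ |k|, one has (1/|l|^{2β})(|k|^{2s} − |m|^{2s}) ≤ C |l|^{1−2β} |m|^{s−1} |k|^{s}. -/

import Mathlib

/-!
Write `a = |k|`, `b = |m|`, `c = |l|`. Since `k = -(l + m)`, the triangle inequality gives
`a - b ≤ c` and hence `b ≤ a ≤ 2b`. The mean value theorem for `x ↦ x ^ (2s)` on `[b, a]` bounds
`a ^ (2s) - b ^ (2s)` by `(a - b) · 2s · a ^ (2s) / b`, and `a ≤ 2b` turns one factor `a ^ s`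
into `2 ^ s b ^ s`. What is left is `c / c ^ (2β) = c ^ (1 - 2β)`.
-/

/-- The Euclidean norm of a lattice vector in ℤ². -/
noncomputable def znorm (v : ℤ × ℤ) : ℝ := Real.sqrt ((v.1 : ℝ) ^ 2 + (v.2 : ℝ) ^ 2)

open Complex in
lemma znorm_eq_norm (v : ℤ × ℤ) : znorm v = ‖((v.1 : ℝ) + (v.2 : ℝ) * I : ℂ)‖ :=
  (norm_add_mul_I _ _).symm

lemma znorm_pos {v : ℤ × ℤ} (hv : v ≠ 0) : 0 < znorm v := by
  rw [znorm_eq_norm, norm_pos_iff]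
  simpa [Complex.ext_iff, Prod.ext_iff] using hv

lemma znorm_add_le (v w : ℤ × ℤ) : znorm (v + w) ≤ znorm v + znorm w := by
  simp only [znorm_eq_norm]
  refine le_of_eq_of_le ?_ (norm_add_le _ _)
  congr 1
  simp only [Prod.fst_add, Prod.snd_add]
  push_cast
  ring

lemma znorm_neg (v : ℤ × ℤ) : znorm (-v) = znorm v := by
  simp [znorm]

lemma znorm_sub_znorm_le_of_add_add_eq_zero {l m k : ℤ × ℤ} (h : l + m + k = 0) :
    znorm k - znorm m ≤ znorm l := by
  rw [eq_neg_of_add_eq_zero_right h, znorm_neg]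
  linarith [znorm_add_le l m]

namespace Real

lemma rpow_sub_rpow_le_mul_sub {p a b : ℝ} (hp : 0 ≤ p) (hb : 0 < b) (hba : b ≤ a) :
    a ^ p - b ^ p ≤ p * a ^ p / b * (a - b) := by
  have ha : 0 < a := hb.trans_le hba
  have hne : ∀ x ∈ Set.Icc b a, x ≠ 0 := fun x hx => (hb.trans_le hx.1).ne'
  refine (convex_Icc b a).image_sub_le_mul_sub_of_deriv_le
    (fun x hx => (continuousAt_rpow_const _ _ (Or.inl (hne x hx))).continuousWithinAt)
    (fun x hx => (differentiableAt_rpow_const_of_ne _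
      (hne x (interior_subset hx))).differentiableWithinAt)
    (fun x hx => ?_) b (Set.left_mem_Icc.2 hba) a (Set.right_mem_Icc.2 hba) hba
  rw [interior_Icc] at hx
  have hx0 : 0 < x := hb.trans hx.1
  -- `p x ^ (p - 1) = p x ^ p / x ≤ p a ^ p / b` on `[b, a]`
  rw [deriv_rpow_const, rpow_sub_one hx0.ne', ← mul_div_assoc]
  gcongr
  exacts [hx.2.le, hx.1.le]

lemma rpow_two_mul_sub_rpow_two_mul_le {s a b c : ℝ} (hs : 0 ≤ s) (hb : 0 < b) (hba : b ≤ a)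
    (hab : a - b ≤ c) (hcb : c ≤ b) :
    a ^ (2 * s) - b ^ (2 * s) ≤ 2 * s * 2 ^ s * c * b ^ (s - 1) * a ^ s := by
  have ha : 0 < a := hb.trans_le hba
  have ha_le : a ^ s ≤ 2 ^ s * b ^ s := by
    rw [← mul_rpow zero_le_two hb.le]
    exact rpow_le_rpow ha.le (by linarith) hs
  calc a ^ (2 * s) - b ^ (2 * s) ≤ 2 * s * a ^ (2 * s) / b * (a - b) :=
        rpow_sub_rpow_le_mul_sub (by positivity) hb hba
    _ = 2 * s * a ^ s * a ^ s / b * (a - b) := by rw [two_mul s, rpow_add ha]; ring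
    _ ≤ 2 * s * (2 ^ s * b ^ s) * a ^ s / b * c := by gcongr
    _ = 2 * s * 2 ^ s * c * b ^ (s - 1) * a ^ s := by rw [rpow_sub_one hb.ne']; ring

end Real

theorem symmetrization_estimate_two_general (s β : ℝ) (hs : 0 ≤ s) :
    ∃ C : ℝ, 0 < C ∧ ∀ l m k : ℤ × ℤ, l ≠ 0 → m ≠ 0 → k ≠ 0 → l + m + k = 0 →
      znorm l ≤ znorm m → znorm m ≤ znorm k →
      (1 / znorm l ^ (2 * β)) * (znorm k ^ (2 * s) - znorm m ^ (2 * s)) ≤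
        C * znorm l ^ (1 - 2 * β) * znorm m ^ (s - 1) * znorm k ^ s := by
  refine ⟨2 * s * 2 ^ s + 1, by positivity, fun l m k hl hm _ hsum hlm hmk => ?_⟩
  have hc := znorm_pos hl
  have hb := znorm_pos hm
  have ha := hb.trans_le hmk
  have key := Real.rpow_two_mul_sub_rpow_two_mul_le hs hb hmk
    (znorm_sub_znorm_le_of_add_add_eq_zero hsum) hlm
  calc 1 / znorm l ^ (2 * β) * (znorm k ^ (2 * s) - znorm m ^ (2 * s))
      ≤ 1 / znorm l ^ (2 * β) *
          ((2 * s * 2 ^ s + 1) * znorm l * znorm m ^ (s - 1) * znorm k ^ s) := by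
        gcongr
        refine key.trans ?_
        gcongr
        linarith
    _ = (2 * s * 2 ^ s + 1) * znorm l ^ (1 - 2 * β) * znorm m ^ (s - 1) * znorm k ^ s := by
        rw [Real.rpow_sub hc, Real.rpow_one]
        ring

theorem symmetrization_estimate_two (s β : ℝ) (hs : 0 ≤ s) (hβ1 : 1 / 2 < β) (hβ2 : β < 1) :
    ∃ C : ℝ, 0 < C ∧ ∀ l m k : ℤ × ℤ, l ≠ 0 → m ≠ 0 → k ≠ 0 → l + m + k = 0 →
      znorm l ≤ znorm m → znorm m ≤ znorm k →
      (1 / znorm l ^ (2 * β)) * (znorm k ^ (2 * s) - znorm m ^ (2 * s)) ≤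
        C * znorm l ^ (1 - 2 * β) * znorm m ^ (s - 1) * znorm k ^ s :=
  symmetrization_estimate_two_general s β hs
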